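/- Let δ_i > 0 and, for 0 < ε < δ_i, let g_{i,ε} : ℝ → ℝ be defined by g_{i,ε}(s) = 0 if |s| ≤ δ_i − ε, g_{i,ε}(s) = (1/(12ε))·(|s| − δ_i + ε)³ if δ_i − ε ≤ |s| ≤ δ_i + ε, and g_{i,ε}(s) = ε²/6 + (1/2)·(|s| − δ_i)² if |s| ≥ δ_i + ε. Define K_{i,ε}(s) = ∫₀^s √(g_{i,ε}''(τ)) dτ. Then |K_{i,ε}(s)| ≤ |s| for every s ∈ ℝ and every ε ∈ (0, δ_i), and for every s ∈ ℝ one has K_{i,ε}(s) → (|s| − δ_i)₊ · sign(s) as ε → 0⁺. -/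

import Mathlib

/-!
Off the four points `|τ| = δᵢ ± ε` the second derivative `g_{i,ε}''(τ)` is explicit: `0` for
`|τ| < δᵢ - ε`, the ramp `(|τ| - δᵢ + ε) / (2ε)` on the transition annulus, and `1` for
`|τ| > δᵢ + ε`. It takes values in `[0, 1]`, which gives `|K_{i,ε}(s)| ≤ |s|`. For `|τ| ≠ δᵢ` the
integrand `√(g_{i,ε}''(τ))` equals the indicator of `{|τ| > δᵢ}` as soon as `ε < ||τ| - δᵢ|`, so by
dominated convergence `K_{i,ε}(s) → ∫₀^s 1_{|τ| > δᵢ} dτ = (|s| - δᵢ)₊ sign s`.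
-/

/-- The piecewise-defined `C²` regularization `g_{i,ε}` of `s ↦ (1/2)(|s| − δᵢ)₊²`. -/
noncomputable def greg (δi ε s : ℝ) : ℝ :=
  if |s| ≤ δi - ε then 0
  else if |s| ≤ δi + ε then 1 / (12 * ε) * (|s| - δi + ε) ^ 3
  else ε ^ 2 / 6 + 1 / 2 * (|s| - δi) ^ 2

/-- `K_{i,ε}(s) = ∫₀^s √(g_{i,ε}''(τ)) dτ`. -/
noncomputable def Kie (δi ε s : ℝ) : ℝ :=
  ∫ τ in (0:ℝ)..s, Real.sqrt (deriv (deriv (greg δi ε)) τ)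

open MeasureTheory Set Filter Topology

noncomputable def gregSecondDeriv (δi ε τ : ℝ) : ℝ :=
  if |τ| ≤ δi - ε then 0 else if |τ| ≤ δi + ε then (|τ| - δi + ε) / (2 * ε) else 1

section SecondDerivative

variable {δi ε τ : ℝ}

lemma gregSecondDeriv_le_one (δi ε τ : ℝ) : gregSecondDeriv δi ε τ ≤ 1 := by
  unfold gregSecondDeriv
  split_ifs with h₁ h₂
  · exact zero_le_one
  · rw [div_le_one (by linarith)]
    linarith
  · exact le_rfl

lemma measurable_gregSecondDeriv (δi ε : ℝ) : Measurable (gregSecondDeriv δi ε) := by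
  unfold gregSecondDeriv
  refine Measurable.ite (measurableSet_le measurable_abs measurable_const) measurable_const ?_
  refine Measurable.ite (measurableSet_le measurable_abs measurable_const) ?_ measurable_const
  exact ((measurable_abs.sub measurable_const).add_const ε).div_const _

lemma gregSecondDeriv_neg (δi ε τ : ℝ) : gregSecondDeriv δi ε (-τ) = gregSecondDeriv δi ε τ := by
  simp only [gregSecondDeriv, abs_neg]

lemma greg_neg (δi ε s : ℝ) : greg δi ε (-s) = greg δi ε s := by
  simp only [greg, abs_neg]

lemma deriv_deriv_comp_neg_of_even {f : ℝ → ℝ} (hf : ∀ x, f (-x) = f x) (x : ℝ) :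
    deriv (deriv f) (-x) = deriv (deriv f) x := by
  have hf' : deriv f = fun y => -deriv f (-y) := by
    funext y
    rw [← deriv_comp_neg]
    simp only [hf]
  conv_rhs => rw [hf']
  simp [deriv_comp_neg]

lemma deriv_deriv_greg_of_abs_lt (h : |τ| < δi - ε) : deriv (deriv (greg δi ε)) τ = 0 := by
  have hloc : greg δi ε =ᶠ[𝓝 τ] fun _ => 0 := by
    filter_upwards [(isOpen_lt continuous_abs continuous_const).mem_nhds h] with x hx
    simp only [greg, if_pos (le_of_lt hx)]
  rw [hloc.deriv.deriv_eq]
  simp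

lemma deriv_deriv_greg_of_mem_Ioo (hεδ : ε ≤ δi) (h : τ ∈ Ioo (δi - ε) (δi + ε)) :
    deriv (deriv (greg δi ε)) τ = (τ - δi + ε) / (2 * ε) := by
  have hloc : greg δi ε =ᶠ[𝓝 τ] fun x => 1 / (12 * ε) * (x - (δi - ε)) ^ 3 := by
    filter_upwards [isOpen_Ioo.mem_nhds h] with x ⟨h₁, h₂⟩
    rw [greg, abs_of_pos (by linarith), if_neg h₁.not_ge, if_pos h₂.le]
    ring
  rw [hloc.deriv.deriv_eq]
  simp only [deriv_const_mul_field', differentiableAt_fun_id, differentiableAt_const,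
    DifferentiableAt.fun_sub, deriv_fun_pow, Nat.cast_ofNat, Nat.add_one_sub_one, deriv_fun_sub,
    deriv_id'', deriv_const', sub_zero, mul_one, pow_one]
  ring

lemma deriv_deriv_greg_of_gt (hε : 0 ≤ ε) (hεδ : ε ≤ δi) (h : δi + ε < τ) :
    deriv (deriv (greg δi ε)) τ = 1 := by
  have hloc : greg δi ε =ᶠ[𝓝 τ] fun x => ε ^ 2 / 6 + 1 / 2 * (x - δi) ^ 2 := by
    filter_upwards [isOpen_Ioi.mem_nhds h] with x (hx : δi + ε < x)
    rw [greg, abs_of_pos (by linarith), if_neg (by linarith), if_neg hx.not_ge]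
  rw [hloc.deriv.deriv_eq]
  simp

lemma deriv_deriv_greg (hε : 0 ≤ ε) (hεδ : ε ≤ δi) (h₁ : |τ| ≠ δi - ε) (h₂ : |τ| ≠ δi + ε) :
    deriv (deriv (greg δi ε)) τ = gregSecondDeriv δi ε τ := by
  rcases h₁.lt_or_gt with hin | hout
  · rw [deriv_deriv_greg_of_abs_lt hin, gregSecondDeriv, if_pos hin.le]
  wlog hτ : 0 < τ generalizing τ
  · have hτ' : 0 < -τ := by
      rw [abs_of_nonpos (not_lt.1 hτ)] at hout
      linarith
    have := this (τ := -τ) (by rwa [abs_neg]) (by rwa [abs_neg]) (by rwa [abs_neg]) hτ'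
    rwa [deriv_deriv_comp_neg_of_even (greg_neg δi ε), gregSecondDeriv_neg] at this
  rw [abs_of_pos hτ] at h₂ hout
  rw [gregSecondDeriv, abs_of_pos hτ, if_neg hout.not_ge]
  rcases h₂.lt_or_gt with hmid | hout'
  · rw [deriv_deriv_greg_of_mem_Ioo hεδ ⟨hout, hmid⟩, if_pos hmid.le]
  · rw [deriv_deriv_greg_of_gt hε hεδ hout', if_neg hout'.not_ge]

end SecondDerivative

lemma ae_abs_ne (c : ℝ) : ∀ᵐ τ : ℝ, |τ| ≠ c :=
  ae_iff.2 <| measure_mono_null (fun _ hτ => eq_or_eq_neg_of_abs_eq (not_not.1 hτ))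
    ((toFinite {c, -c}).measure_zero volume)

lemma Kie_eq_integral_sqrt_gregSecondDeriv {δi ε : ℝ} (hε : 0 ≤ ε) (hεδ : ε ≤ δi) (s : ℝ) :
    Kie δi ε s = ∫ τ in (0 : ℝ)..s, √(gregSecondDeriv δi ε τ) := by
  refine intervalIntegral.integral_congr_ae ?_
  filter_upwards [ae_abs_ne (δi - ε), ae_abs_ne (δi + ε)] with τ h₁ h₂ _
  rw [deriv_deriv_greg hε hεδ h₁ h₂]

lemma norm_sqrt_gregSecondDeriv_le_one (δi ε τ : ℝ) : ‖√(gregSecondDeriv δi ε τ)‖ ≤ 1 := by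
  rw [Real.norm_of_nonneg (Real.sqrt_nonneg _)]
  exact Real.sqrt_le_one.2 (gregSecondDeriv_le_one δi ε τ)

lemma abs_integral_sqrt_gregSecondDeriv_le (δi ε s : ℝ) :
    |∫ τ in (0 : ℝ)..s, √(gregSecondDeriv δi ε τ)| ≤ |s| := by
  simpa using intervalIntegral.norm_integral_le_of_norm_le_const (a := 0) (b := s)
    fun τ _ => norm_sqrt_gregSecondDeriv_le_one δi ε τ

lemma indicator_eventually_eq_sqrt_gregSecondDeriv {δi τ : ℝ} (hτ : |τ| ≠ δi) :
    ∀ᶠ ε in 𝓝 0, {x : ℝ | δi < |x|}.indicator 1 τ = √(gregSecondDeriv δi ε τ) := by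
  rcases hτ.lt_or_gt with h | h
  · filter_upwards [eventually_lt_nhds (sub_pos.2 h)] with ε hε
    rw [gregSecondDeriv, if_pos (by linarith)]
    simp [not_lt.2 h.le]
  · filter_upwards [eventually_lt_nhds (sub_pos.2 h),
      eventually_gt_nhds (neg_lt_zero.2 (sub_pos.2 h))] with ε h₁ h₂
    rw [gregSecondDeriv, if_neg (by linarith), if_neg (by linarith)]
    simp [h]

lemma tendsto_integral_sqrt_gregSecondDeriv (δi s : ℝ) :
    Tendsto (fun ε => ∫ τ in (0 : ℝ)..s, √(gregSecondDeriv δi ε τ)) (𝓝 0)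
      (𝓝 (∫ τ in (0 : ℝ)..s, {x : ℝ | δi < |x|}.indicator 1 τ)) := by
  refine intervalIntegral.tendsto_integral_filter_of_dominated_convergence (fun _ => 1)
    (.of_forall fun ε => (measurable_gregSecondDeriv δi ε).sqrt.aestronglyMeasurable)
    (.of_forall fun ε => ae_of_all _ fun τ _ => norm_sqrt_gregSecondDeriv_le_one δi ε τ)
    intervalIntegrable_const ?_
  filter_upwards [ae_abs_ne δi] with τ hτ _
  exact tendsto_const_nhds.congr' (indicator_eventually_eq_sqrt_gregSecondDeriv hτ)

lemma integral_indicator_lt_abs_of_nonneg {δi s : ℝ} (hδ : 0 ≤ δi) (hs : 0 ≤ s) :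
    ∫ τ in (0 : ℝ)..s, {x : ℝ | δi < |x|}.indicator 1 τ = max (s - δi) 0 := by
  have hset : {x : ℝ | δi < |x|} ∩ Ioc 0 s = Ioc δi s := by
    ext x
    simp only [mem_inter_iff, mem_ofPred_eq, mem_Ioc]
    constructor
    · rintro ⟨hx, h₀, hs⟩
      exact ⟨by rwa [abs_of_pos h₀] at hx, hs⟩
    · rintro ⟨hx, hs⟩
      exact ⟨by rwa [abs_of_pos (by linarith)], by linarith, hs⟩
  rw [intervalIntegral.integral_of_le hs,
    integral_indicator_one (measurableSet_lt measurable_const measurable_abs),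
    measureReal_restrict_apply (measurableSet_lt measurable_const measurable_abs), hset,
    Real.volume_real_Ioc]

lemma integral_indicator_lt_abs {δi : ℝ} (hδ : 0 ≤ δi) (s : ℝ) :
    ∫ τ in (0 : ℝ)..s, {x : ℝ | δi < |x|}.indicator 1 τ = max (|s| - δi) 0 * Real.sign s := by
  rcases lt_trichotomy s 0 with hs | rfl | hs
  · set f : ℝ → ℝ := {x : ℝ | δi < |x|}.indicator 1
    have hf : ∀ τ, f (-τ) = f τ := fun τ => by simp [f, indicator]
    have hodd : ∫ τ in (0 : ℝ)..s, f τ = -∫ τ in (0 : ℝ)..(-s), f τ :=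
      calc ∫ τ in (0 : ℝ)..s, f τ = ∫ τ in (0 : ℝ)..s, f (-τ) := by simp only [hf]
        _ = ∫ τ in (-s)..(-0), f τ := intervalIntegral.integral_comp_neg f
        _ = -∫ τ in (0 : ℝ)..(-s), f τ := by rw [neg_zero, intervalIntegral.integral_symm]
    rw [hodd, integral_indicator_lt_abs_of_nonneg hδ (neg_nonneg.2 hs.le), abs_of_neg hs,
      Real.sign_of_neg hs]
    ring
  · simp
  · rw [integral_indicator_lt_abs_of_nonneg hδ hs.le, abs_of_pos hs, Real.sign_of_pos hs,
      mul_one]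

/-- Let `δᵢ > 0`. Then `|K_{i,ε}(s)| ≤ |s|` for every `s ∈ ℝ` and every
`ε ∈ (0, δᵢ)`, and for every `s ∈ ℝ` one has
`K_{i,ε}(s) → (|s| − δᵢ)₊ · sign(s)` as `ε → 0⁺`. -/
theorem stmt16 (δi : ℝ) (hδ : 0 < δi) :
    (∀ ε ∈ Set.Ioo 0 δi, ∀ s : ℝ, |Kie δi ε s| ≤ |s|) ∧
      (∀ s : ℝ, Filter.Tendsto (fun ε => Kie δi ε s) (nhdsWithin 0 (Set.Ioo 0 δi))
        (nhds (max (|s| - δi) 0 * Real.sign s))) := by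
  refine ⟨fun ε hε s => ?_, fun s => ?_⟩
  · rw [Kie_eq_integral_sqrt_gregSecondDeriv hε.1.le hε.2.le]
    exact abs_integral_sqrt_gregSecondDeriv_le δi ε s
  · rw [← integral_indicator_lt_abs hδ.le s]
    refine ((tendsto_integral_sqrt_gregSecondDeriv δi s).mono_left nhdsWithin_le_nhds).congr' ?_
    filter_upwards [self_mem_nhdsWithin] with ε hε
    exact (Kie_eq_integral_sqrt_gregSecondDeriv hε.1.le hε.2.le s).symm
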